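/- arXiv:2503.16700 — 2 statements merged into one kernel-verified Lean document; each statement's English description precedes it below -/
import Mathlib

section
/- Suppose ε > 0, β > 0, and Q₁, Q₂ : S×A → ℝ satisfy L₁(Q₁) ≤ ε, where L₁ is the AGT2 expected loss. Then for every (s,a) ∈ S×A, |(TQ₂)(s,a) − Q₁(s,a)| ≤ √(ε·|S|·|A|). -/
open Finset

/-- Maximum of `Q s' a'` over actions `a'`. -/
noncomputable def maxQ {S A : Type*} [Fintype A] [Nonempty A]
    (Q : S → A → ℝ) (s' : S) : ℝ :=
  univ.sup' univ_nonempty (fun a' => Q s' a')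

/-- The Bellman optimality operator. -/
noncomputable def bellmanT {S A : Type*} [Fintype S] [Fintype A] [Nonempty A]
    (P r : S → A → S → ℝ) (γ : ℝ) (Q : S → A → ℝ) : S → A → ℝ :=
  fun s a => ∑ s', P s a s' * (r s a s' + γ * maxQ Q s')

/-- Sup norm on `ℝ^{S×A}`. -/
noncomputable def supNorm {S A : Type*} [Fintype S] [Fintype A] [Nonempty S] [Nonempty A]
    (Q : S → A → ℝ) : ℝ :=
  univ.sup' univ_nonempty (fun p : S × A => |Q p.1 p.2|)

/-- AGT2 expected loss `L₁`. -/
noncomputable def agt2L1 {S A : Type*} [Fintype S] [Fintype A] [Nonempty A]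
    (P r : S → A → S → ℝ) (γ : ℝ) (Q₁ Q₂ : S → A → ℝ) : ℝ :=
  (1 / ((Fintype.card S : ℝ) * (Fintype.card A : ℝ))) *
    ∑ p : S × A, ∑ s', P p.1 p.2 s' *
      (r p.1 p.2 s' + γ * maxQ Q₂ s' - Q₁ p.1 p.2) ^ 2

/-! By Jensen's inequality for the square, `((TQ₂)(s,a) − Q₁(s,a))²` is at most the expected
squared Bellman residual at `(s,a)`; that nonnegative term is one of the `|S|·|A|` summands
averaged in `L₁`, hence at most `|S|·|A|·ε`. -/

theorem sq_sum_mul_le_sum_mul_sq {ι : Type*} (t : Finset ι) {w : ι → ℝ}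
    (hw0 : ∀ i ∈ t, 0 ≤ w i) (hw1 : ∑ i ∈ t, w i = 1) (x : ι → ℝ) :
    (∑ i ∈ t, w i * x i) ^ 2 ≤ ∑ i ∈ t, w i * x i ^ 2 := by
  simpa [hw1] using sum_sq_le_sum_mul_sum_of_sq_le_mul t hw0
    (fun i hi => mul_nonneg (hw0 i hi) (sq_nonneg (x i))) (fun i _ => le_of_eq (by ring))

section Bellman

variable {S A : Type*} [Fintype S] [Fintype A] [Nonempty A]
  (P r : S → A → S → ℝ) (γ : ℝ) (Q₁ Q₂ : S → A → ℝ)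

noncomputable def bellmanResidualSq (s : S) (a : A) : ℝ :=
  ∑ s', P s a s' * (r s a s' + γ * maxQ Q₂ s' - Q₁ s a) ^ 2

theorem agt2L1_eq_sum_bellmanResidualSq :
    agt2L1 P r γ Q₁ Q₂ = (1 / ((Fintype.card S : ℝ) * (Fintype.card A : ℝ))) *
      ∑ p : S × A, bellmanResidualSq P r γ Q₁ Q₂ p.1 p.2 :=
  rfl

theorem bellmanResidualSq_nonneg (hP0 : ∀ s a s', 0 ≤ P s a s') (s : S) (a : A) :
    0 ≤ bellmanResidualSq P r γ Q₁ Q₂ s a :=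
  sum_nonneg fun s' _ => mul_nonneg (hP0 s a s') (sq_nonneg _)

theorem bellmanResidualSq_le_card_mul_agt2L1 (hP0 : ∀ s a s', 0 ≤ P s a s') (s : S) (a : A) :
    bellmanResidualSq P r γ Q₁ Q₂ s a ≤
      (Fintype.card S : ℝ) * (Fintype.card A : ℝ) * agt2L1 P r γ Q₁ Q₂ := by
  have : Nonempty S := ⟨s⟩
  have hcard : (0 : ℝ) < (Fintype.card S : ℝ) * (Fintype.card A : ℝ) := by positivity
  rw [agt2L1_eq_sum_bellmanResidualSq, ← mul_assoc, mul_one_div_cancel hcard.ne', one_mul]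
  exact single_le_sum (f := fun p : S × A => bellmanResidualSq P r γ Q₁ Q₂ p.1 p.2)
    (fun p _ => bellmanResidualSq_nonneg P r γ Q₁ Q₂ hP0 p.1 p.2) (mem_univ (s, a))

theorem bellmanT_sub_eq_sum (hP1 : ∀ s a, ∑ s', P s a s' = 1) (s : S) (a : A) (c : ℝ) :
    bellmanT P r γ Q₂ s a - c = ∑ s', P s a s' * (r s a s' + γ * maxQ Q₂ s' - c) := by
  simp only [bellmanT, mul_sub, sum_sub_distrib, ← sum_mul, hP1 s a, one_mul]

theorem sq_bellmanT_sub_le_bellmanResidualSq (hP0 : ∀ s a s', 0 ≤ P s a s')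
    (hP1 : ∀ s a, ∑ s', P s a s' = 1) (s : S) (a : A) :
    (bellmanT P r γ Q₂ s a - Q₁ s a) ^ 2 ≤ bellmanResidualSq P r γ Q₁ Q₂ s a := by
  rw [bellmanT_sub_eq_sum P r γ Q₂ hP1]
  exact sq_sum_mul_le_sum_mul_sq univ (fun s' _ => hP0 s a s') (hP1 s a) _

end Bellman

theorem agt2_L1_small_implies_bellman_close_general
    {S A : Type*} [Fintype S] [Fintype A] [Nonempty A]
    (P r : S → A → S → ℝ) (γ : ℝ)
    (hP0 : ∀ s a s', 0 ≤ P s a s') (hP1 : ∀ s a, ∑ s', P s a s' = 1)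
    (ε : ℝ)
    (Q₁ Q₂ : S → A → ℝ)
    (hL1 : agt2L1 P r γ Q₁ Q₂ ≤ ε) :
    ∀ s a, |bellmanT P r γ Q₂ s a - Q₁ s a| ≤
      Real.sqrt (ε * (Fintype.card S : ℝ) * (Fintype.card A : ℝ)) := by
  intro s a
  rw [← Real.sqrt_sq_eq_abs]
  apply Real.sqrt_le_sqrt
  calc (bellmanT P r γ Q₂ s a - Q₁ s a) ^ 2
      ≤ bellmanResidualSq P r γ Q₁ Q₂ s a :=
        sq_bellmanT_sub_le_bellmanResidualSq P r γ Q₁ Q₂ hP0 hP1 s a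
    _ ≤ (Fintype.card S : ℝ) * (Fintype.card A : ℝ) * agt2L1 P r γ Q₁ Q₂ :=
        bellmanResidualSq_le_card_mul_agt2L1 P r γ Q₁ Q₂ hP0 s a
    _ ≤ (Fintype.card S : ℝ) * (Fintype.card A : ℝ) * ε := by gcongr
    _ = ε * (Fintype.card S : ℝ) * (Fintype.card A : ℝ) := by ring

theorem agt2_L1_small_implies_bellman_close
    {S A : Type*} [Fintype S] [Fintype A] [Nonempty S] [Nonempty A]
    (P r : S → A → S → ℝ) (γ : ℝ) (hγ0 : 0 ≤ γ) (hγ1 : γ < 1)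
    (hP0 : ∀ s a s', 0 ≤ P s a s') (hP1 : ∀ s a, ∑ s', P s a s' = 1)
    (β ε : ℝ) (hβ : 0 < β) (hε : 0 < ε)
    (Q₁ Q₂ : S → A → ℝ)
    (hL1 : agt2L1 P r γ Q₁ Q₂ ≤ ε) :
    ∀ s a, |bellmanT P r γ Q₂ s a - Q₁ s a| ≤
      Real.sqrt (ε * (Fintype.card S : ℝ) * (Fintype.card A : ℝ)) :=
  agt2_L1_small_implies_bellman_close_general P r γ hP0 hP1 ε Q₁ Q₂ hL1
end

section
/- Let a, b ≥ 0 and suppose Q₁, Q₂ : S×A → ℝ satisfy |(TQ₂)(s,a) − Q₁(s,a)| ≤ a for all (s,a) ∈ S×A and ‖Q₂ − Q₁‖∞ ≤ b. Then ‖Q₁ − Q*‖∞ ≤ a/(1−γ) + γ·b/(1−γ). -/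
/-!
Since `Q*` is a fixed point of the `γ`-contraction `T`,
`‖Q₁ - Q*‖ ≤ ‖Q₁ - T Q₂‖ + ‖T Q₂ - T Q*‖ ≤ a + γ ‖Q₂ - Q*‖ ≤ a + γ (b + ‖Q₁ - Q*‖)`,
and solving for `‖Q₁ - Q*‖` gives the bound. The sup norm `supNorm` is Mathlib's norm on
`S → A → ℝ`, so the argument is carried out in that normed space.
-/

open Finset

lemma norm_le_of_forall_abs_le {S A : Type*} [Fintype S] [Fintype A] [Nonempty S] [Nonempty A]
    {Q : S → A → ℝ} {c : ℝ} (h : ∀ s a, |Q s a| ≤ c) : ‖Q‖ ≤ c :=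
  (pi_norm_le_iff_of_nonempty Q).2 fun s => (pi_norm_le_iff_of_nonempty (Q s)).2 (h s)

lemma supNorm_eq_norm {S A : Type*} [Fintype S] [Fintype A] [Nonempty S] [Nonempty A]
    (Q : S → A → ℝ) : supNorm Q = ‖Q‖ :=
  le_antisymm
    (sup'_le _ _ fun p _ => (norm_le_pi_norm (Q p.1) p.2).trans (norm_le_pi_norm Q p.1))
    (norm_le_of_forall_abs_le fun s a =>
      le_sup' (fun p : S × A => |Q p.1 p.2|) (mem_univ (s, a)))

lemma Finset.sup'_le_sup'_add {ι : Type*} {s : Finset ι} (hs : s.Nonempty) {f g : ι → ℝ} {c : ℝ}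
    (h : ∀ i ∈ s, f i ≤ g i + c) : s.sup' hs f ≤ s.sup' hs g + c :=
  sup'_le _ _ fun i hi => (h i hi).trans (add_le_add_left (le_sup' g hi) c)

lemma Finset.abs_sup'_sub_sup'_le {ι : Type*} {s : Finset ι} (hs : s.Nonempty) {f g : ι → ℝ}
    {c : ℝ} (h : ∀ i ∈ s, |f i - g i| ≤ c) : |s.sup' hs f - s.sup' hs g| ≤ c :=
  abs_sub_le_iff.2
    ⟨sub_le_iff_le_add'.2 <| sup'_le_sup'_add hs fun i hi =>
      sub_le_iff_le_add'.1 (abs_sub_le_iff.1 (h i hi)).1,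
     sub_le_iff_le_add'.2 <| sup'_le_sup'_add hs fun i hi =>
      sub_le_iff_le_add'.1 (abs_sub_le_iff.1 (h i hi)).2⟩

lemma abs_maxQ_sub_maxQ_le {S A : Type*} [Fintype A] [Nonempty A] (Q Q' : S → A → ℝ) (s : S) :
    |maxQ Q s - maxQ Q' s| ≤ ‖Q s - Q' s‖ :=
  abs_sup'_sub_sup'_le _ fun a _ => norm_le_pi_norm (Q s - Q' s) a

lemma abs_sum_mul_le_of_sum_eq_one {ι : Type*} {s : Finset ι} {p x : ι → ℝ} {c : ℝ}
    (hp0 : ∀ i ∈ s, 0 ≤ p i) (hp1 : ∑ i ∈ s, p i = 1) (hx : ∀ i ∈ s, |x i| ≤ c) :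
    |∑ i ∈ s, p i * x i| ≤ c :=
  calc |∑ i ∈ s, p i * x i| ≤ ∑ i ∈ s, p i * |x i| := by
        refine (abs_sum_le_sum_abs _ _).trans (sum_le_sum fun i hi => ?_)
        rw [abs_mul, abs_of_nonneg (hp0 i hi)]
    _ ≤ ∑ i ∈ s, p i * c := sum_le_sum fun i hi => mul_le_mul_of_nonneg_left (hx i hi) (hp0 i hi)
    _ = c := by rw [← sum_mul, hp1, one_mul]

lemma norm_bellmanT_sub_le {S A : Type*} [Fintype S] [Fintype A] [Nonempty A]
    {P : S → A → S → ℝ} (r : S → A → S → ℝ) {γ : ℝ} (hγ0 : 0 ≤ γ)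
    (hP0 : ∀ s a s', 0 ≤ P s a s') (hP1 : ∀ s a, ∑ s', P s a s' = 1) (Q Q' : S → A → ℝ) :
    ‖bellmanT P r γ Q - bellmanT P r γ Q'‖ ≤ γ * ‖Q - Q'‖ := by
  refine (pi_norm_le_iff_of_nonneg (by positivity)).2 fun s =>
    (pi_norm_le_iff_of_nonneg (by positivity)).2 fun a => ?_
  have hdiff : bellmanT P r γ Q s a - bellmanT P r γ Q' s a
      = ∑ s', P s a s' * (γ * (maxQ Q s' - maxQ Q' s')) := by
    simp only [bellmanT, ← sum_sub_distrib, ← mul_sub]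
    congr! 2
    ring
  rw [Real.norm_eq_abs, Pi.sub_apply, Pi.sub_apply, hdiff]
  refine abs_sum_mul_le_of_sum_eq_one (fun s' _ => hP0 s a s') (hP1 s a) fun s' _ => ?_
  rw [abs_mul, abs_of_nonneg hγ0]
  exact mul_le_mul_of_nonneg_left
    ((abs_maxQ_sub_maxQ_le Q Q' s').trans (norm_le_pi_norm (Q - Q') s')) hγ0

lemma Function.IsFixedPt.dist_le_div_one_sub {X : Type*} [PseudoMetricSpace X] {T : X → X} {x' : X}
    (hx' : Function.IsFixedPt T x') {γ : ℝ} (hγ0 : 0 ≤ γ) (hγ1 : γ < 1)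
    (hT : ∀ x y, dist (T x) (T y) ≤ γ * dist x y) (x y : X) :
    dist x x' ≤ (dist (T y) x + γ * dist y x) / (1 - γ) := by
  have h : dist x x' ≤ dist (T y) x + γ * (dist y x + dist x x') :=
    calc dist x x' ≤ dist x (T y) + dist (T y) (T x') := by
          rw [hx']; exact dist_triangle _ _ _
      _ ≤ dist (T y) x + γ * (dist y x + dist x x') := by
          rw [dist_comm x]
          gcongr
          exact (hT y x').trans (by gcongr; exact dist_triangle _ _ _)
  rw [le_div_iff₀ (by linarith)]
  linarith

theorem bellman_residual_perturbation_bound_general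
    {S A : Type*} [Fintype S] [Fintype A] [Nonempty S] [Nonempty A]
    (P r : S → A → S → ℝ) (γ : ℝ) (hγ0 : 0 ≤ γ) (hγ1 : γ < 1)
    (hP0 : ∀ s a s', 0 ≤ P s a s') (hP1 : ∀ s a, ∑ s', P s a s' = 1)
    (Qstar : S → A → ℝ) (hQstar : bellmanT P r γ Qstar = Qstar)
    (a b : ℝ)
    (Q₁ Q₂ : S → A → ℝ)
    (h₁ : ∀ s a', |bellmanT P r γ Q₂ s a' - Q₁ s a'| ≤ a)
    (h₂ : supNorm (fun s a' => Q₂ s a' - Q₁ s a') ≤ b) :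
    supNorm (fun s a' => Q₁ s a' - Qstar s a') ≤ a / (1 - γ) + γ * b / (1 - γ) := by
  have hT : ∀ Q Q', dist (bellmanT P r γ Q) (bellmanT P r γ Q') ≤ γ * dist Q Q' := by
    simpa only [dist_eq_norm] using norm_bellmanT_sub_le r hγ0 hP0 hP1
  have hres : dist (bellmanT P r γ Q₂) Q₁ ≤ a := by
    rw [dist_eq_norm]; exact norm_le_of_forall_abs_le h₁
  have hpert : dist Q₂ Q₁ ≤ b := by
    rwa [dist_eq_norm, ← supNorm_eq_norm]
  rw [supNorm_eq_norm, ← add_div]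
  calc dist Q₁ Qstar ≤ (dist (bellmanT P r γ Q₂) Q₁ + γ * dist Q₂ Q₁) / (1 - γ) :=
        Function.IsFixedPt.dist_le_div_one_sub hQstar hγ0 hγ1 hT Q₁ Q₂
    _ ≤ (a + γ * b) / (1 - γ) := by gcongr

theorem bellman_residual_perturbation_bound
    {S A : Type*} [Fintype S] [Fintype A] [Nonempty S] [Nonempty A]
    (P r : S → A → S → ℝ) (γ : ℝ) (hγ0 : 0 ≤ γ) (hγ1 : γ < 1)
    (hP0 : ∀ s a s', 0 ≤ P s a s') (hP1 : ∀ s a, ∑ s', P s a s' = 1)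
    (Qstar : S → A → ℝ) (hQstar : bellmanT P r γ Qstar = Qstar)
    (a b : ℝ) (ha : 0 ≤ a) (hb : 0 ≤ b)
    (Q₁ Q₂ : S → A → ℝ)
    (h₁ : ∀ s a', |bellmanT P r γ Q₂ s a' - Q₁ s a'| ≤ a)
    (h₂ : supNorm (fun s a' => Q₂ s a' - Q₁ s a') ≤ b) :
    supNorm (fun s a' => Q₁ s a' - Qstar s a') ≤ a / (1 - γ) + γ * b / (1 - γ) :=
  bellman_residual_perturbation_bound_general P r γ hγ0 hγ1 hP0 hP1 Qstar hQstar a b Q₁ Q₂ h₁ h₂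
end
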